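/- arXiv:2103.16675 — 2 statements merged into one kernel-verified Lean document; each statement's English description precedes it below -/
import Mathlib

section
/- Let w = uv²u − α uvuv − β u²v² − β⁻¹ v²u² + αβ⁻¹ vuvu + vu²v in V^⊗4 where V = span{u,v}, α ∈ k, β ∈ k×, and let σ : V → V be given by σ(u) = −β⁻¹u, σ(v) = −βv. Then w is a σ-twisted superpotential, i.e. (id^⊗3 ⊗ σ)(θ(w)) = w where θ cyclically permutes tensor factors (u₁⊗u₂⊗u₃⊗u₄ ↦ u₂⊗u₃⊗u₄⊗u₁). -/
open TensorProduct LinearMap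

/-- The cyclic shift `θ : V^⊗4 → V^⊗4`, `u₁⊗u₂⊗u₃⊗u₄ ↦ u₂⊗u₃⊗u₄⊗u₁`
(on right-nested fourfold tensor products). -/
noncomputable def cyclicShift4 (k V : Type*) [Field k] [AddCommGroup V] [Module k V] :
    (V ⊗[k] (V ⊗[k] (V ⊗[k] V))) ≃ₗ[k] V ⊗[k] (V ⊗[k] (V ⊗[k] V)) :=
  (TensorProduct.comm k V (V ⊗[k] (V ⊗[k] V))).trans
    ((TensorProduct.assoc k V (V ⊗[k] V) V).trans
      (TensorProduct.congr (LinearEquiv.refl k V) (TensorProduct.assoc k V V V)))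

/-- Let `V = span{u,v}`, `α ∈ k`, `β ∈ k×`, and
`w = uv²u − α uvuv − β u²v² − β⁻¹ v²u² + αβ⁻¹ vuvu + vu²v ∈ V^⊗4`.
If `σ(u) = −β⁻¹ u` and `σ(v) = −β v`, then `w` is a `σ`-twisted superpotential:
`(id^⊗3 ⊗ σ)(θ(w)) = w`. -/
theorem downup_twisted_superpotential
    {k V : Type*} [Field k] [AddCommGroup V] [Module k V]
    (u v : V) (hind : LinearIndependent k ![u, v])
    (hspan : Submodule.span k {u, v} = ⊤)
    (α : k) (β : k) (hβ : β ≠ 0)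
    (σ : V →ₗ[k] V) (hσu : σ u = (-β⁻¹) • u) (hσv : σ v = (-β) • v) :
    (LinearMap.lTensor V (LinearMap.lTensor V (LinearMap.lTensor V σ)))
      ((cyclicShift4 k V)
        (u ⊗ₜ[k] (v ⊗ₜ[k] (v ⊗ₜ[k] u))
          - α • (u ⊗ₜ[k] (v ⊗ₜ[k] (u ⊗ₜ[k] v)))
          - β • (u ⊗ₜ[k] (u ⊗ₜ[k] (v ⊗ₜ[k] v)))
          - β⁻¹ • (v ⊗ₜ[k] (v ⊗ₜ[k] (u ⊗ₜ[k] u)))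
          + (α * β⁻¹) • (v ⊗ₜ[k] (u ⊗ₜ[k] (v ⊗ₜ[k] u)))
          + v ⊗ₜ[k] (u ⊗ₜ[k] (u ⊗ₜ[k] v))))
      = u ⊗ₜ[k] (v ⊗ₜ[k] (v ⊗ₜ[k] u))
          - α • (u ⊗ₜ[k] (v ⊗ₜ[k] (u ⊗ₜ[k] v)))
          - β • (u ⊗ₜ[k] (u ⊗ₜ[k] (v ⊗ₜ[k] v)))
          - β⁻¹ • (v ⊗ₜ[k] (v ⊗ₜ[k] (u ⊗ₜ[k] u)))
          + (α * β⁻¹) • (v ⊗ₜ[k] (u ⊗ₜ[k] (v ⊗ₜ[k] u)))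
          + v ⊗ₜ[k] (u ⊗ₜ[k] (u ⊗ₜ[k] v)) := by
  simp only [map_sub, map_add, map_smul, cyclicShift4, LinearEquiv.trans_apply,
    TensorProduct.comm_tmul, TensorProduct.assoc_tmul, TensorProduct.congr_tmul,
    LinearEquiv.refl_apply, lTensor_tmul, hσu, hσv]
  simp only [TensorProduct.smul_tmul, TensorProduct.tmul_smul, neg_smul, TensorProduct.neg_tmul,
    TensorProduct.tmul_neg, smul_neg, smul_smul]
  match_scalars <;> field_simp
end

section
/- Let T be a ring with a full idempotent e (TeT = T), and let Λ = eTe. For any idempotent f ∈ eTe, the two-sided quotients satisfy: Λ/⟨f⟩_Λ ≅ eT ⊗_T (T/⟨f⟩_T) ⊗_T Te as Λ-bimodules, where ⟨f⟩ denotes the two-sided ideal generated by f in the respective ring. Consequently, Λ/ΛfΛ ≅ e(T/TfT)e. -/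
def cornerSubring (T : Type*) [NonUnitalRing T] (e : T) : NonUnitalSubring T where
  carrier := {x | e * x = x ∧ x * e = x}
  add_mem' := by
    rintro a b ⟨ha1, ha2⟩ ⟨hb1, hb2⟩
    exact ⟨by rw [mul_add, ha1, hb1], by rw [add_mul, ha2, hb2]⟩
  zero_mem' := ⟨mul_zero e, zero_mul e⟩
  neg_mem' := by
    rintro a ⟨h1, h2⟩
    exact ⟨by rw [mul_neg, h1], by rw [neg_mul, h2]⟩
  mul_mem' := by
    rintro a b ⟨ha1, ha2⟩ ⟨hb1, hb2⟩
    exact ⟨by rw [← mul_assoc, ha1], by rw [mul_assoc, hb2]⟩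

open Pointwise

section Aux

variable {T : Type*} [Ring T] {e : T}

lemma corner_mem (he : IsIdempotentElem e) (t : T) : e * t * e ∈ cornerSubring T e :=
  ⟨by rw [← mul_assoc, ← mul_assoc, he.eq], by rw [mul_assoc, he.eq]⟩

variable (f : ↥(cornerSubring T e))

/-- Key lemma: if an element of the corner lies in `TfT`, it lies in `ΛfΛ`. -/
lemma mem_span_of_mem_span (he : IsIdempotentElem e)
    (x : ↥(cornerSubring T e)) (hx : (x : T) ∈ TwoSidedIdeal.span {(f : T)}) :
    x ∈ (TwoSidedIdeal.span {f} : TwoSidedIdeal ↥(cornerSubring T e)) := by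
  rw [TwoSidedIdeal.mem_span_iff_mem_addSubgroup_closure] at hx
  have key : ∀ (t : T) (_ : t ∈ AddSubgroup.closure
      ((Set.univ : Set T) * {(f : T)} * (Set.univ : Set T))),
      (⟨e * t * e, corner_mem he t⟩ : ↥(cornerSubring T e)) ∈
        (TwoSidedIdeal.span {f} : TwoSidedIdeal ↥(cornerSubring T e)) := by
    intro t ht
    induction ht using AddSubgroup.closure_induction with
    | mem t ht =>
      obtain ⟨-, ⟨a, -, y, hy, rfl⟩, b, -, rfl⟩ := ht
      rw [Set.mem_singleton_iff] at hy
      subst hy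
      have : (⟨e * (a * ↑f * b) * e, corner_mem he _⟩ : ↥(cornerSubring T e)) =
          ⟨e * a * e, corner_mem he a⟩ * f * ⟨e * b * e, corner_mem he b⟩ := by
        apply Subtype.ext
        show e * (a * ↑f * b) * e = e * a * e * ↑f * (e * b * e)
        have h1 : ∀ z : T, e * ((f : T) * z) = (f : T) * z := fun z => by
          rw [← mul_assoc, f.2.1]
        have h2 : ∀ z : T, (f : T) * (e * z) = (f : T) * z := fun z => by
          rw [← mul_assoc, f.2.2]
        simp only [mul_assoc, h1, h2]
      rw [this]
      exact TwoSidedIdeal.mul_mem_right _ _ _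
        (TwoSidedIdeal.mul_mem_left _ _ _ (TwoSidedIdeal.subset_span rfl))
    | zero =>
      have : (⟨e * 0 * e, corner_mem he 0⟩ : ↥(cornerSubring T e)) = 0 :=
        Subtype.ext (by simp)
      rw [this]; exact TwoSidedIdeal.zero_mem _
    | add a b ha hb iha ihb =>
      have : (⟨e * (a + b) * e, corner_mem he _⟩ : ↥(cornerSubring T e)) =
          ⟨e * a * e, corner_mem he a⟩ + ⟨e * b * e, corner_mem he b⟩ :=
        Subtype.ext (by simp [mul_add, add_mul])
      rw [this]; exact TwoSidedIdeal.add_mem _ iha ihb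
    | neg a ha iha =>
      have : (⟨e * (-a) * e, corner_mem he _⟩ : ↥(cornerSubring T e)) =
          -⟨e * a * e, corner_mem he a⟩ := Subtype.ext (by simp)
      rw [this]; exact TwoSidedIdeal.neg_mem _ iha
  have hx' := key _ hx
  convert hx' using 2
  rw [x.2.1, x.2.2]

lemma mem_spanT_of_mem_span
    (x : ↥(cornerSubring T e))
    (hx : x ∈ (TwoSidedIdeal.span {f} : TwoSidedIdeal ↥(cornerSubring T e))) :
    (x : T) ∈ TwoSidedIdeal.span {(f : T)} := by
  have := TwoSidedIdeal.mem_span_iff.mp hx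
    (TwoSidedIdeal.comap (NonUnitalSubringClass.subtype (cornerSubring T e))
      (TwoSidedIdeal.span {(f : T)}))
    (by intro y hy; rw [Set.mem_singleton_iff] at hy; subst hy
        exact (TwoSidedIdeal.mem_comap
          (NonUnitalSubringClass.subtype (cornerSubring T e))).mpr
          (TwoSidedIdeal.subset_span rfl))
  exact (TwoSidedIdeal.mem_comap (NonUnitalSubringClass.subtype (cornerSubring T e))).mp this

end Aux

/-- Let `T` be a ring with a full idempotent `e` (`TeT = T`), let
`Λ = eTe` be the corner ring, and let `f ∈ Λ` be an idempotent.  Then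
`Λ/⟨f⟩_Λ ≅ eT ⊗_T (T/⟨f⟩_T) ⊗_T Te`; evaluating the tensor products, there is a
canonical isomorphism `Λ/ΛfΛ ≅ e(T/TfT)e` (compatible with the quotient maps, hence an
isomorphism of `Λ`-bimodules and of rings). -/
theorem corner_quotient_iso
    {T : Type*} [Ring T] (e : T) (he : IsIdempotentElem e)
    (hfull : (TwoSidedIdeal.span {e} : TwoSidedIdeal T) = ⊤)
    (f : ↥(cornerSubring T e)) (hf : IsIdempotentElem f) :
    ∃ φ : (TwoSidedIdeal.span {f} :
            TwoSidedIdeal ↥(cornerSubring T e)).ringCon.Quotient ≃+*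
          ↥(cornerSubring
              ((TwoSidedIdeal.span {(f : T)} : TwoSidedIdeal T).ringCon.Quotient)
              (((e : T) : (TwoSidedIdeal.span {(f : T)} :
                  TwoSidedIdeal T).ringCon.Quotient))),
      ∀ x : ↥(cornerSubring T e),
        ((φ ((x : ↥(cornerSubring T e)) :
            (TwoSidedIdeal.span {f} :
              TwoSidedIdeal ↥(cornerSubring T e)).ringCon.Quotient) : _) :
          (TwoSidedIdeal.span {(f : T)} : TwoSidedIdeal T).ringCon.Quotient)
        = (((x : T)) : (TwoSidedIdeal.span {(f : T)} :
            TwoSidedIdeal T).ringCon.Quotient) := by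
  set I : TwoSidedIdeal T := TwoSidedIdeal.span {(f : T)} with hI
  set J : TwoSidedIdeal ↥(cornerSubring T e) := TwoSidedIdeal.span {f} with hJ
  set Q := I.ringCon.Quotient with hQ
  -- the corner of Q at image of e
  set C := cornerSubring Q ((e : T) : Q) with hC
  -- the underlying map
  have hmemC : ∀ x : ↥(cornerSubring T e), ((x : T) : Q) ∈ C := by
    intro x
    constructor
    · rw [← RingCon.coe_mul, x.2.1]
    · rw [← RingCon.coe_mul, x.2.2]
  set g : ↥(cornerSubring T e) → C := fun x => ⟨((x : T) : Q), hmemC x⟩ with hg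
  have hresp : ∀ a b : ↥(cornerSubring T e), J.ringCon a b → g a = g b := by
    intro a b hab
    rw [TwoSidedIdeal.rel_iff] at hab
    have : ((a : T) - b) ∈ I := mem_spanT_of_mem_span f _ hab
    apply Subtype.ext
    show ((a : T) : Q) = ((b : T) : Q)
    rw [RingCon.eq, TwoSidedIdeal.rel_iff]
    exact this
  set G : J.ringCon.Quotient → C := fun q => Quotient.liftOn' q g hresp with hG
  have hGmk : ∀ x : ↥(cornerSubring T e),
      G ((x : ↥(cornerSubring T e)) : J.ringCon.Quotient) = g x := fun _ => rfl
  have hinj : Function.Injective G := by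
    intro q q'
    induction q using Quotient.inductionOn' with | h a =>
    induction q' using Quotient.inductionOn' with | h b =>
    intro hab
    have h1 : ((a : T) : Q) = ((b : T) : Q) := congrArg Subtype.val hab
    rw [RingCon.eq, TwoSidedIdeal.rel_iff] at h1
    have : (a - b : ↥(cornerSubring T e)) ∈ J := mem_span_of_mem_span f he _ h1
    exact Quotient.sound' ((TwoSidedIdeal.rel_iff _ _ _).mpr this)
  have hsurj : Function.Surjective G := by
    intro y
    obtain ⟨t, ht⟩ := Quotient.exists_rep y.1
    refine ⟨((⟨e * t * e, corner_mem he t⟩ : ↥(cornerSubring T e)) :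
      J.ringCon.Quotient), ?_⟩
    rw [hGmk]
    apply Subtype.ext
    show ((e * t * e : T) : Q) = y.1
    have h1 : ((e : T) : Q) * y.1 = y.1 := y.2.1
    have h2 : y.1 * ((e : T) : Q) = y.1 := y.2.2
    have ht' : ((t : T) : Q) = y.1 := ht
    rw [RingCon.coe_mul, RingCon.coe_mul, ht', h1, h2]
  refine ⟨{ Equiv.ofBijective G ⟨hinj, hsurj⟩ with
      map_mul' := ?_, map_add' := ?_ }, ?_⟩
  · intro q q'
    induction q using Quotient.inductionOn' with | h a =>
    induction q' using Quotient.inductionOn' with | h b =>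
    apply Subtype.ext
    show (((a * b : ↥(cornerSubring T e)) : T) : Q) = ((a : T) : Q) * ((b : T) : Q)
    rw [← RingCon.coe_mul]; rfl
  · intro q q'
    induction q using Quotient.inductionOn' with | h a =>
    induction q' using Quotient.inductionOn' with | h b =>
    apply Subtype.ext
    show (((a + b : ↥(cornerSubring T e)) : T) : Q) = ((a : T) : Q) + ((b : T) : Q)
    rw [← RingCon.coe_add]; rfl
  · intro x
    rfl
end
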